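/- For every pair (r,t) ∈ ℝ², the 7-dimensional algebra g_6(r,t) with brackets ab=c, ac=d, ad=e, ae=f, af=g, ag=rg, bc=e, bd=f, be=rtf+(1−t)g, bf=rg, bg=r²g, cd=−rtf+tg satisfies the Jacobi identity, hence is a Lie algebra; moreover g_6(r,t) is nilpotent if and only if r = 0. -/

import Mathlib

noncomputable section

/-- Standard basis vector of `ℝ⁷`. -/
def e (k : Fin 7) : Fin 7 → ℝ := Pi.single k 1

/-- Structure constants of `g₆(r,t)` (basis `a,…,g = e 0,…,e 6`):
`ab=c, ac=d, ad=e, ae=f, af=g, ag=rg, bc=e, bd=f, be=rtf+(1−t)g, bf=rg, bg=r²g,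
cd=−rtf+tg`, extended antisymmetrically. -/
def tbl (r t : ℝ) : Fin 7 → Fin 7 → Fin 7 → ℝ :=
  ![![0, e 2, e 3, e 4, e 5, e 6, r • e 6],
    ![-e 2, 0, e 4, e 5, (r * t) • e 5 + (1 - t) • e 6, r • e 6, (r ^ 2) • e 6],
    ![-e 3, -e 4, 0, -(r * t) • e 5 + t • e 6, 0, 0, 0],
    ![-e 4, -e 5, (r * t) • e 5 - t • e 6, 0, 0, 0, 0],
    ![-e 5, -((r * t) • e 5 + (1 - t) • e 6), 0, 0, 0, 0, 0],
    ![-e 6, -(r • e 6), 0, 0, 0, 0, 0],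
    ![-(r • e 6), -((r ^ 2) • e 6), 0, 0, 0, 0, 0]]

/-- The bracket of `g₆(r,t)`. -/
def br (r t : ℝ) (x y : Fin 7 → ℝ) : Fin 7 → ℝ :=
  ∑ p : Fin 7, ∑ q : Fin 7, (x p * y q) • tbl r t p q

/-- Lower central series of a bracket. -/
def lcs (μ : (Fin 7 → ℝ) → (Fin 7 → ℝ) → (Fin 7 → ℝ)) : ℕ → Submodule ℝ (Fin 7 → ℝ)
  | 0 => ⊤
  | j + 1 => Submodule.span ℝ {w | ∃ u ∈ lcs μ j, ∃ v, w = μ u v}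

/-!
The Jacobi identity is a coordinatewise polynomial identity in the structure constants.

If `r ≠ 0`, then `[g, a] = -r g` with `g = e 6`, so `g` reproduces itself under bracketing and
lies in every term of the lower central series. If `r = 0`, the algebra is graded with `e i` in
degree `i + 1`, so bracketing with anything raises by one the number of leading coordinates that
vanish, and `lcs (br 0 t) 7 = 0`.
-/

theorem br_eq (r t : ℝ) (x y : Fin 7 → ℝ) :
    br r t x y = ![0, 0, x 0 * y 1 - x 1 * y 0, x 0 * y 2 - x 2 * y 0,
      (x 0 * y 3 - x 3 * y 0) + (x 1 * y 2 - x 2 * y 1),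
      (x 0 * y 4 - x 4 * y 0) + (x 1 * y 3 - x 3 * y 1)
        + r * t * (x 1 * y 4 - x 4 * y 1) - r * t * (x 2 * y 3 - x 3 * y 2),
      (x 0 * y 5 - x 5 * y 0) + r * (x 0 * y 6 - x 6 * y 0)
        + (1 - t) * (x 1 * y 4 - x 4 * y 1) + r * (x 1 * y 5 - x 5 * y 1)
        + r ^ 2 * (x 1 * y 6 - x 6 * y 1) + t * (x 2 * y 3 - x 3 * y 2)] := by
  funext i
  fin_cases i <;>
    simp only [br, tbl, e, Finset.sum_apply, Pi.smul_apply, smul_eq_mul, Fin.sum_univ_seven,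
      Pi.add_apply, Pi.neg_apply, Pi.sub_apply, Pi.zero_apply, Pi.single_apply, Fin.zero_eta,
      Fin.mk_one, Fin.reduceFinMk, Matrix.cons_val, Matrix.cons_val_zero, Matrix.cons_val_one,
      Fin.reduceEq, if_true, if_false] <;>
    ring

theorem br_jacobi (r t : ℝ) (x y z : Fin 7 → ℝ) :
    br r t (br r t x y) z + br r t (br r t y z) x + br r t (br r t z x) y = 0 := by
  funext i
  fin_cases i <;>
    simp only [br_eq, Pi.add_apply, Pi.zero_apply, Fin.zero_eta, Fin.mk_one, Fin.reduceFinMk,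
      Matrix.cons_val, Matrix.cons_val_zero, Matrix.cons_val_one] <;>
    ring

theorem br_e_six_e_zero (r t : ℝ) : br r t (e 6) (e 0) = -r • e 6 := by
  funext i
  fin_cases i <;> simp [br_eq, e]

theorem mem_lcs_of_bracket_eq_smul {μ : (Fin 7 → ℝ) → (Fin 7 → ℝ) → (Fin 7 → ℝ)}
    {v w : Fin 7 → ℝ} {c : ℝ} (hc : c ≠ 0) (h : μ v w = c • v) (n : ℕ) : v ∈ lcs μ n := by
  induction n with
  | zero => exact Submodule.mem_top
  | succ n ih =>
    have hbracket : μ v w ∈ lcs μ (n + 1) := Submodule.subset_span ⟨v, ih, w, rfl⟩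
    rw [h] at hbracket
    simpa [hc] using (lcs μ (n + 1)).smul_mem c⁻¹ hbracket

theorem lcs_le_of_bracket_mem {μ : (Fin 7 → ℝ) → (Fin 7 → ℝ) → (Fin 7 → ℝ)}
    {F : ℕ → Submodule ℝ (Fin 7 → ℝ)} (h0 : F 0 = ⊤)
    (hF : ∀ j u v, u ∈ F j → μ u v ∈ F (j + 1)) (j : ℕ) : lcs μ j ≤ F j := by
  induction j with
  | zero => exact h0.ge
  | succ j ih =>
    rw [lcs, Submodule.span_le]
    rintro _ ⟨u, hu, v, rfl⟩
    exact hF j u v (ih hu)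

def vanishingBelow (k : ℕ) : Submodule ℝ (Fin 7 → ℝ) :=
  Submodule.pi {i | (i : ℕ) < k} fun _ => ⊥

theorem mem_vanishingBelow {k : ℕ} {w : Fin 7 → ℝ} :
    w ∈ vanishingBelow k ↔ ∀ i : Fin 7, (i : ℕ) < k → w i = 0 := by
  simp [vanishingBelow, Submodule.mem_pi]

theorem vanishingBelow_zero : vanishingBelow 0 = ⊤ := by
  ext
  simp [mem_vanishingBelow]

theorem vanishingBelow_seven : vanishingBelow 7 = ⊥ := by
  ext w
  simp [mem_vanishingBelow, funext_iff]

theorem br_zero_mem_vanishingBelow (t : ℝ) {k : ℕ} {u : Fin 7 → ℝ}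
    (hu : u ∈ vanishingBelow k) (v : Fin 7 → ℝ) : br 0 t u v ∈ vanishingBelow (k + 1) := by
  rw [mem_vanishingBelow] at hu ⊢
  intro i hi
  have hlow : ∀ p : Fin 7, p < i → u p = 0 := fun p hp => hu p (by omega)
  rw [br_eq]
  fin_cases i <;> simp (disch := decide) [hlow]

theorem lcs_br_zero_seven_eq_bot (t : ℝ) : lcs (br 0 t) 7 = ⊥ := by
  rw [← le_bot_iff, ← vanishingBelow_seven]
  exact lcs_le_of_bracket_mem vanishingBelow_zero
    (fun _ _ v hu => br_zero_mem_vanishingBelow t hu v) 7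

/-- For every `(r,t) ∈ ℝ²` the algebra `g₆(r,t)` satisfies the Jacobi identity, hence is
a Lie algebra; moreover `g₆(r,t)` is nilpotent if and only if `r = 0`. -/
theorem g6_jacobi_and_nilpotent_iff (r t : ℝ) :
    (∀ x y z : Fin 7 → ℝ,
      br r t (br r t x y) z + br r t (br r t y z) x + br r t (br r t z x) y = 0) ∧
    ((∃ j : ℕ, lcs (br r t) j = ⊥) ↔ r = 0) := by
  refine ⟨br_jacobi r t, ⟨fun ⟨j, hj⟩ => ?_, fun hr => ⟨7, hr ▸ lcs_br_zero_seven_eq_bot t⟩⟩⟩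
  by_contra hr
  have hg : e 6 ∈ lcs (br r t) j :=
    mem_lcs_of_bracket_eq_smul (neg_ne_zero.mpr hr) (br_e_six_e_zero r t) j
  rw [hj, Submodule.mem_bot] at hg
  simpa [e] using congrFun hg 6
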